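/- arXiv:2406.11166 — 2 statements merged into one kernel-verified Lean document; each statement's English description precedes it below -/
import Mathlib

section
/- Suppose the binary relation ≻ on F satisfies Axioms 1–7. Then for all f, g ∈ F: f ≻ g if and only if f ≻_p g and f ≻_o g. -/
/-!
Framework: Anscombe–Aumann acts, finitely additive probability measures,
simple acts, hope-and-prepare preferences (Bastianello–Hill style setup).
-/

open Set

section Framework

variable (S : Type*) [MeasurableSpace S]

/-- The measurable sets (events) of `S`, as a subtype. -/
abbrev MSet := {A : Set S // MeasurableSet A}

/-- Finitely additive probability measures on `(S, Σ)`, viewed as real-valued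
set functions on events.  The weak* topology is the topology of pointwise
convergence on events, i.e. the product topology on `MSet S → ℝ`. -/
def ProbCharges : Set (MSet S → ℝ) :=
  {p | (∀ A, 0 ≤ p A) ∧ p ⟨Set.univ, MeasurableSet.univ⟩ = 1 ∧
    ∀ A B : MSet S, Disjoint A.1 B.1 → p ⟨A.1 ∪ B.1, A.2.union B.2⟩ = p A + p B}

end Framework

section Fns

variable {S : Type*} [MeasurableSpace S]

/-- `φ : S → ℝ` is a measurable simple function (an element of `B₀(Σ)`). -/
def IsSimpleFn (φ : S → ℝ) : Prop :=
  (Set.range φ).Finite ∧ ∀ y : ℝ, MeasurableSet (φ ⁻¹' {y})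

/-- The integral `∫ φ dp` of a simple function `φ` against a finitely additive
measure `p` (junk value `0` if `φ` is not simple). -/
noncomputable def fInt (p : MSet S → ℝ) (φ : S → ℝ) : ℝ :=
  @dite _ (IsSimpleFn φ) (Classical.dec _)
    (fun h => ∑ y ∈ h.1.toFinset, y * p ⟨φ ⁻¹' {y}, h.2 y⟩) (fun _ => 0)

/-- A functional `I : B₀(Σ) → ℝ` is monotonic. -/
def MonotonicFn (I : (S → ℝ) → ℝ) : Prop :=
  ∀ φ ψ, IsSimpleFn φ → IsSimpleFn ψ → (∀ s, φ s ≤ ψ s) → I φ ≤ I ψ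

/-- A functional `I : B₀(Σ) → ℝ` is constant-linear: `I(aφ + b) = a I(φ) + b`
for `a ≥ 0`, `b ∈ ℝ`. -/
def ConstLinearFn (I : (S → ℝ) → ℝ) : Prop :=
  ∀ φ, IsSimpleFn φ → ∀ a : ℝ, 0 ≤ a → ∀ b : ℝ,
    I (fun s => a * φ s + b) = a * I φ + b

end Fns

section Acts

variable {S : Type*} [MeasurableSpace S] {V : Type*} [AddCommGroup V] [Module ℝ V]

/-- `f : S → V` is a simple act with outcomes in `X`: it is `X`-valued,
takes finitely many values and is `Σ`-measurable. -/
def IsAct (X : Set V) (f : S → V) : Prop :=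
  (∀ s, f s ∈ X) ∧ (Set.range f).Finite ∧ ∀ v : V, MeasurableSet (f ⁻¹' {v})

/-- Pointwise mixture `αf + (1-α)g` of two acts. -/
def mixAct (α : ℝ) (f g : S → V) : S → V := fun s => α • f s + (1 - α) • g s

/-- The constant act with outcome `x`. -/
def constAct (S : Type*) {V : Type*} (x : V) : S → V := fun _ => x

/-- `u : V → ℝ` is affine on the convex set `X`. -/
def IsAffineOn (u : V → ℝ) (X : Set V) : Prop :=
  ∀ x ∈ X, ∀ y ∈ X, ∀ α : ℝ, 0 ≤ α → α ≤ 1 →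
    u (α • x + (1 - α) • y) = α * u x + (1 - α) * u y

/-- `u` is non-constant on `X`. -/
def NonConstOn (u : V → ℝ) (X : Set V) : Prop := ∃ x ∈ X, ∃ y ∈ X, u x ≠ u y

/-- Expected utility `∫ u(f) dp` of the act `f` under the measure `p`. -/
noncomputable def EU (u : V → ℝ) (f : S → V) (p : MSet S → ℝ) : ℝ :=
  fInt p (fun s => u (f s))

/-- Worst-case expected utility of `f` over the set of scenarios `C`. -/
noncomputable def minEU (u : V → ℝ) (C : Set (MSet S → ℝ)) (f : S → V) : ℝ :=
  sInf (EU u f '' C)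

/-- Best-case expected utility of `f` over the set of scenarios `D`. -/
noncomputable def maxEU (u : V → ℝ) (D : Set (MSet S → ℝ)) (f : S → V) : ℝ :=
  sSup (EU u f '' D)

/-- `f` and `g` are incomparable (`f ⋈ g`). -/
def Incomp (R : (S → V) → (S → V) → Prop) (f g : S → V) : Prop := ¬ R f g ∧ ¬ R g f

end Acts

section Axioms

variable {S : Type*} [MeasurableSpace S] {V : Type*} [AddCommGroup V] [Module ℝ V]
variable (X : Set V) (R : (S → V) → (S → V) → Prop)

/-- Axiom 1: `≻` is asymmetric and transitive on acts, and its restriction to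
constant acts is non-trivial and negatively transitive. -/
def PrefAx1 : Prop :=
  (∀ f g, IsAct X f → IsAct X g → R f g → ¬ R g f) ∧
  (∀ f g h, IsAct X f → IsAct X g → IsAct X h → R f g → R g h → R f h) ∧
  (∃ x ∈ X, ∃ y ∈ X, R (constAct S x) (constAct S y)) ∧
  (∀ x ∈ X, ∀ y ∈ X, ∀ z ∈ X, ¬ R (constAct S x) (constAct S y) →
    ¬ R (constAct S y) (constAct S z) → ¬ R (constAct S x) (constAct S z))

/-- Axiom 2 (continuity). -/
def PrefAx2 : Prop :=
  ∀ f g h, IsAct X f → IsAct X g → IsAct X h →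
    IsOpen {α : Set.Icc (0 : ℝ) 1 | R (mixAct (α : ℝ) f g) h} ∧
    IsOpen {α : Set.Icc (0 : ℝ) 1 | R h (mixAct (α : ℝ) f g)}

/-- Axiom 3 (certainty independence). -/
def PrefAx3 : Prop :=
  ∀ f g, IsAct X f → IsAct X g → ∀ x ∈ X, ∀ α : ℝ, 0 < α → α < 1 →
    (R f g ↔ R (mixAct α f (constAct S x)) (mixAct α g (constAct S x)))

/-- Axiom 4: for any outcome `x`, the upper and lower contour sets at the
constant act `x` are convex. -/
def PrefAx4 : Prop :=
  ∀ x ∈ X,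
    (∀ f g, IsAct X f → IsAct X g → R f (constAct S x) → R g (constAct S x) →
      ∀ α : ℝ, 0 ≤ α → α ≤ 1 → R (mixAct α f g) (constAct S x)) ∧
    (∀ f g, IsAct X f → IsAct X g → R (constAct S x) f → R (constAct S x) g →
      ∀ α : ℝ, 0 ≤ α → α ≤ 1 → R (constAct S x) (mixAct α f g))

/-- Axiom 5 (monotonicity). -/
def PrefAx5 : Prop :=
  ∀ f g, IsAct X f → IsAct X g →
    (∀ s : S, R (constAct S (f s)) (constAct S (g s))) → R f g

/-- Axiom 6: if every outcome incomparable to `f` is incomparable to `g`,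
then `f` and `g` are incomparable. -/
def PrefAx6 : Prop :=
  ∀ f g, IsAct X f → IsAct X g →
    (∀ x ∈ X, Incomp R f (constAct S x) → Incomp R g (constAct S x)) → Incomp R f g

/-- Axiom 7: if `f ⋈ x`, `x ≻ g`, `g ⋈ y` and `f ≻ y`, then `f ≻ g`. -/
def PrefAx7 : Prop :=
  ∀ f g, IsAct X f → IsAct X g → ∀ x ∈ X, ∀ y ∈ X,
    Incomp R f (constAct S x) → R (constAct S x) g →
    Incomp R g (constAct S y) → R f (constAct S y) → R f g

end Axioms

section Reps

variable {S : Type*} [MeasurableSpace S] {V : Type*} [AddCommGroup V] [Module ℝ V]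

/-- `(u, C, D)` is a hope-and-prepare representation of `R`. -/
def IsHPRep (X : Set V) (R : (S → V) → (S → V) → Prop) (u : V → ℝ)
    (C D : Set (MSet S → ℝ)) : Prop :=
  IsAffineOn u X ∧ NonConstOn u X ∧
  C.Nonempty ∧ D.Nonempty ∧ C ⊆ ProbCharges S ∧ D ⊆ ProbCharges S ∧
  IsCompact C ∧ IsCompact D ∧ Convex ℝ C ∧ Convex ℝ D ∧ (C ∩ D).Nonempty ∧
  ∀ f g, IsAct X f → IsAct X g →
    (R f g ↔ (minEU u C g < minEU u C f ∧ maxEU u D g < maxEU u D f))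

/-- `(u, C)` is a Bewley representation of `R`. -/
def IsBewleyRep (X : Set V) (R : (S → V) → (S → V) → Prop) (u : V → ℝ)
    (C : Set (MSet S → ℝ)) : Prop :=
  IsAffineOn u X ∧ NonConstOn u X ∧
  C.Nonempty ∧ C ⊆ ProbCharges S ∧ IsCompact C ∧ Convex ℝ C ∧
  ∀ f g, IsAct X f → IsAct X g → (R f g ↔ ∀ p ∈ C, EU u g p < EU u f p)

/-- `(u, C, D)` is a twofold multi-prior representation of `R`. -/
def IsTwofoldRep (X : Set V) (R : (S → V) → (S → V) → Prop) (u : V → ℝ)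
    (C D : Set (MSet S → ℝ)) : Prop :=
  IsAffineOn u X ∧ NonConstOn u X ∧
  C.Nonempty ∧ D.Nonempty ∧ C ⊆ ProbCharges S ∧ D ⊆ ProbCharges S ∧
  IsCompact C ∧ IsCompact D ∧ Convex ℝ C ∧ Convex ℝ D ∧ (C ∩ D).Nonempty ∧
  ∀ f g, IsAct X f → IsAct X g → (R f g ↔ maxEU u D g < minEU u C f)

end Reps

section Statement

variable {S : Type*} [MeasurableSpace S] [Nonempty S]
variable {V : Type*} [AddCommGroup V] [Module ℝ V]

/-- The derived pessimistic relation: `g ≻_p f` iff there is an outcome `x`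
with `g ≻ x` and `x ⋈ f`. -/
def PessRel (X : Set V) (R : (S → V) → (S → V) → Prop) (g f : S → V) : Prop :=
  ∃ x ∈ X, R g (constAct S x) ∧ Incomp R (constAct S x) f

/-- The derived optimistic relation: `g ≻_o f` iff there is an outcome `x`
with `x ⋈ g` and `x ≻ f`. -/
def OptRel (X : Set V) (R : (S → V) → (S → V) → Prop) (g f : S → V) : Prop :=
  ∃ x ∈ X, Incomp R (constAct S x) g ∧ R (constAct S x) f


theorem isAct_const {S : Type*} [MeasurableSpace S] {V : Type*} [AddCommGroup V]
    [Module ℝ V] {X : Set V} {x : V} (hx : x ∈ X) : IsAct X (constAct S x) := by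
  refine ⟨fun s => hx, Set.Finite.subset (Set.finite_singleton x) ?_, fun v => ?_⟩
  · rintro _ ⟨s, rfl⟩; rfl
  · by_cases h : x = v
    · convert MeasurableSet.univ
      ext s; simp [constAct, h]
    · convert MeasurableSet.empty
      ext s; simp [constAct, h]

/-- Step 2: under Axioms 1–7, `f ≻ g` iff `f ≻_p g` and
`f ≻_o g`. -/
theorem statement16 (X : Set V) (hX : Convex ℝ X) (hX2 : ∃ x ∈ X, ∃ y ∈ X, x ≠ y)
    (R : (S → V) → (S → V) → Prop)
    (hax : PrefAx1 X R ∧ PrefAx2 X R ∧ PrefAx3 X R ∧ PrefAx4 X R ∧ PrefAx5 X R ∧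
      PrefAx6 X R ∧ PrefAx7 X R)
    (f g : S → V) (hf : IsAct X f) (hg : IsAct X g) :
    R f g ↔ (PessRel X R f g ∧ OptRel X R f g) := by
  obtain ⟨ax1, ax2, ax3, ax4, ax5, ax6, ax7⟩ := hax
  obtain ⟨hasym, htrans, -, -⟩ := ax1
  constructor
  · intro hfg
    constructor
    · -- PessRel: use Axiom 6 on (g, f)
      by_contra hP
      have h6 := ax6 g f hg hf
      have : ¬ Incomp R g f := fun h => h.2 hfg
      have hex : ¬ ∀ x ∈ X, Incomp R g (constAct S x) → Incomp R f (constAct S x) :=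
        fun h => this (h6 h)
      push_neg at hex
      obtain ⟨x, hxX, hgx, hfx⟩ := hex
      rcases not_and_or.mp hfx with h1 | h1
      · push_neg at h1
        exact hP ⟨x, hxX, h1, hgx.2, hgx.1⟩
      · push_neg at h1
        exact hgx.2 (htrans (constAct S x) f g (isAct_const hxX) hf hg h1 hfg)
    · -- OptRel: use Axiom 6 on (f, g)
      by_contra hO
      have h6 := ax6 f g hf hg
      have : ¬ Incomp R f g := fun h => h.1 hfg
      have hex : ¬ ∀ x ∈ X, Incomp R f (constAct S x) → Incomp R g (constAct S x) :=
        fun h => this (h6 h)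
      push_neg at hex
      obtain ⟨x, hxX, hfx, hgx⟩ := hex
      rcases not_and_or.mp hgx with h1 | h1
      · push_neg at h1
        exact hfx.1 (htrans f g (constAct S x) hf hg (isAct_const hxX) hfg h1)
      · push_neg at h1
        exact hO ⟨x, hxX, ⟨hfx.2, hfx.1⟩, h1⟩
  · rintro ⟨⟨x, hxX, hfx, hxg⟩, ⟨y, hyX, hyf, hyg⟩⟩
    exact ax7 f g hf hg y hyX x hxX ⟨hyf.2, hyf.1⟩ hyg ⟨hxg.2, hxg.1⟩ hfx


end Statement
end

section
/- Let I, I', I'' : B₀(Σ) → ℝ be monotonic and constant-linear functionals with I'(φ) ≤ I''(φ) for all φ ∈ B₀(Σ). Then the following are equivalent: (i) for all φ, ψ ∈ B₀(Σ), if I'(φ) > I'(ψ) and I''(φ) > I''(ψ), then I(φ) > I(ψ); (ii) there exists α ∈ [0,1] such that I(φ) = α·I'(φ) + (1-α)·I''(φ) for all φ ∈ B₀(Σ). -/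
open Set

/-!
If `I` respects the strict unanimity of `I'` and `I''`, then shifting `φ` up by a small constant
`ε` shows `I ψ ≤ I φ` whenever `I' ψ ≤ I' φ` and `I'' ψ ≤ I'' φ`, so `I φ` depends only on the
pair `(I' φ, I'' φ)`. If `I' = I''` on `B₀(Σ)`, then `α = 1` works. Otherwise some `ψ₀` has
`I' ψ₀ = 0` and `I'' ψ₀ = 1`; every `φ` has the same pair of values as
`(I'' φ - I' φ) ψ₀ + I' φ`, so `I φ = (1 - β) I' φ + β I'' φ` with `β = I ψ₀`, and comparing `ψ₀`
with the constants `0` and `1` gives `β ∈ [0, 1]`.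
-/

section ConvexCombination

variable {S : Type*} [MeasurableSpace S]

theorem IsSimpleFn.const (c : ℝ) : IsSimpleFn (fun _ : S => c) :=
  ⟨Set.finite_range_const, fun y => measurable_const (measurableSet_singleton y)⟩

theorem IsSimpleFn.comp {φ : S → ℝ} (hφ : IsSimpleFn φ) (g : ℝ → ℝ) :
    IsSimpleFn (g ∘ φ) := by
  refine ⟨Set.range_comp g φ ▸ hφ.1.image g, fun y => ?_⟩
  have hunion : (g ∘ φ) ⁻¹' {y} = ⋃ x ∈ Set.range φ ∩ g ⁻¹' {y}, φ ⁻¹' {x} := by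
    ext s
    simp
  rw [hunion]
  exact (hφ.1.inter_of_left _).measurableSet_biUnion fun x _ => hφ.2 x

namespace ConstLinearFn

variable {J : (S → ℝ) → ℝ}

theorem apply_const (hJ : ConstLinearFn J) (c : ℝ) : J (fun _ => c) = c := by
  simpa using hJ _ (IsSimpleFn.const 0) 0 le_rfl c

theorem apply_add_const (hJ : ConstLinearFn J) {φ : S → ℝ} (hφ : IsSimpleFn φ) (c : ℝ) :
    J (fun s => φ s + c) = J φ + c := by
  simpa using hJ φ hφ 1 zero_le_one c

theorem exists_normalized {J' : (S → ℝ) → ℝ} (hJ : ConstLinearFn J) (hJ' : ConstLinearFn J')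
    {χ : S → ℝ} (hχ : IsSimpleFn χ) (hlt : J χ < J' χ) :
    ∃ ψ, IsSimpleFn ψ ∧ J ψ = 0 ∧ J' ψ = 1 := by
  have hd : 0 < J' χ - J χ := sub_pos.2 hlt
  refine ⟨fun s => (J' χ - J χ)⁻¹ * χ s + -(J χ / (J' χ - J χ)),
    hχ.comp fun x => (J' χ - J χ)⁻¹ * x + -(J χ / (J' χ - J χ)), ?_, ?_⟩
  · rw [hJ χ hχ _ (inv_nonneg.2 hd.le)]
    field_simp
    ring
  · rw [hJ' χ hχ _ (inv_nonneg.2 hd.le)]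
    field_simp
    ring

end ConstLinearFn

def RespectsStrictUnanimity (I I' I'' : (S → ℝ) → ℝ) : Prop :=
  ∀ φ ψ, IsSimpleFn φ → IsSimpleFn ψ → I' ψ < I' φ → I'' ψ < I'' φ → I ψ < I φ

theorem respectsStrictUnanimity_of_eq_convexCombination {I I' I'' : (S → ℝ) → ℝ} {α : ℝ}
    (hα : α ∈ Set.Icc (0 : ℝ) 1) (hI : ∀ φ, IsSimpleFn φ → I φ = α * I' φ + (1 - α) * I'' φ) :
    RespectsStrictUnanimity I I' I'' := by
  intro φ ψ hφ hψ hlt' hlt''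
  rw [hI φ hφ, hI ψ hψ]
  set m := min (I' φ - I' ψ) (I'' φ - I'' ψ)
  have hm : 0 < m := lt_min (sub_pos.2 hlt') (sub_pos.2 hlt'')
  nlinarith [mul_le_mul_of_nonneg_left (min_le_left (I' φ - I' ψ) (I'' φ - I'' ψ)) hα.1,
    mul_le_mul_of_nonneg_left (min_le_right (I' φ - I' ψ) (I'' φ - I'' ψ)) (sub_nonneg.2 hα.2)]

namespace RespectsStrictUnanimity

variable {I I' I'' : (S → ℝ) → ℝ} (hU : RespectsStrictUnanimity I I' I'')
  (hcl : ConstLinearFn I) (hcl' : ConstLinearFn I') (hcl'' : ConstLinearFn I'')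
include hU hcl hcl' hcl''

theorem apply_le_apply {φ ψ : S → ℝ} (hφ : IsSimpleFn φ) (hψ : IsSimpleFn ψ)
    (h' : I' ψ ≤ I' φ) (h'' : I'' ψ ≤ I'' φ) : I ψ ≤ I φ := by
  refine le_of_forall_pos_lt_add fun ε hε => ?_
  have hφε : IsSimpleFn (fun s => φ s + ε) := hφ.comp (· + ε)
  rw [← hcl.apply_add_const hφ]
  exact hU _ ψ hφε hψ (by rw [hcl'.apply_add_const hφ]; linarith)
    (by rw [hcl''.apply_add_const hφ]; linarith)

theorem apply_eq_apply {φ ψ : S → ℝ} (hφ : IsSimpleFn φ) (hψ : IsSimpleFn ψ)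
    (h' : I' φ = I' ψ) (h'' : I'' φ = I'' ψ) : I φ = I ψ :=
  le_antisymm (hU.apply_le_apply hcl hcl' hcl'' hψ hφ h'.le h''.le)
    (hU.apply_le_apply hcl hcl' hcl'' hφ hψ h'.ge h''.ge)

theorem apply_eq_left_of_forall_eq (heq : ∀ φ, IsSimpleFn φ → I' φ = I'' φ) {φ : S → ℝ}
    (hφ : IsSimpleFn φ) : I φ = I' φ := by
  have hc := IsSimpleFn.const (S := S) (I' φ)
  rw [hU.apply_eq_apply hcl hcl' hcl'' hφ hc (hcl'.apply_const _).symm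
    (by rw [hcl''.apply_const, heq φ hφ]), hcl.apply_const]

theorem apply_mem_Icc_of_normalized {ψ₀ : S → ℝ} (hψ₀ : IsSimpleFn ψ₀) (h0 : I' ψ₀ = 0)
    (h1 : I'' ψ₀ = 1) : I ψ₀ ∈ Set.Icc (0 : ℝ) 1 := by
  constructor
  · simpa [hcl.apply_const] using hU.apply_le_apply hcl hcl' hcl'' hψ₀ (IsSimpleFn.const 0)
      (by simp [hcl'.apply_const, h0]) (by simp [hcl''.apply_const, h1])
  · simpa [hcl.apply_const] using hU.apply_le_apply hcl hcl' hcl'' (IsSimpleFn.const 1) hψ₀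
      (by simp [hcl'.apply_const, h0]) (by simp [hcl''.apply_const, h1])

theorem apply_eq_of_normalized (hle : ∀ φ, IsSimpleFn φ → I' φ ≤ I'' φ) {ψ₀ : S → ℝ}
    (hψ₀ : IsSimpleFn ψ₀) (h0 : I' ψ₀ = 0) (h1 : I'' ψ₀ = 1) {φ : S → ℝ} (hφ : IsSimpleFn φ) :
    I φ = (1 - I ψ₀) * I' φ + (1 - (1 - I ψ₀)) * I'' φ := by
  have hgap : 0 ≤ I'' φ - I' φ := sub_nonneg.2 (hle φ hφ)
  have hψ : IsSimpleFn (fun s => (I'' φ - I' φ) * ψ₀ s + I' φ) :=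
    hψ₀.comp fun x => (I'' φ - I' φ) * x + I' φ
  rw [hU.apply_eq_apply hcl hcl' hcl'' hφ hψ (by rw [hcl' ψ₀ hψ₀ _ hgap, h0]; ring)
    (by rw [hcl'' ψ₀ hψ₀ _ hgap, h1]; ring), hcl ψ₀ hψ₀ _ hgap]
  ring

theorem exists_eq_convexCombination (hle : ∀ φ, IsSimpleFn φ → I' φ ≤ I'' φ) :
    ∃ α ∈ Set.Icc (0 : ℝ) 1, ∀ φ, IsSimpleFn φ → I φ = α * I' φ + (1 - α) * I'' φ := by
  by_cases hgap : ∃ χ, IsSimpleFn χ ∧ I' χ < I'' χ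
  · obtain ⟨χ, hχ, hlt⟩ := hgap
    obtain ⟨ψ₀, hψ₀, h0, h1⟩ := hcl'.exists_normalized hcl'' hχ hlt
    have hβ := hU.apply_mem_Icc_of_normalized hcl hcl' hcl'' hψ₀ h0 h1
    exact ⟨1 - I ψ₀, ⟨by linarith [hβ.2], by linarith [hβ.1]⟩,
      fun φ hφ => hU.apply_eq_of_normalized hcl hcl' hcl'' hle hψ₀ h0 h1 hφ⟩
  · simp only [not_exists, not_and, not_lt] at hgap
    refine ⟨1, ⟨zero_le_one, le_rfl⟩, fun φ hφ => ?_⟩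
    rw [hU.apply_eq_left_of_forall_eq hcl hcl' hcl''
      (fun φ hφ => (hle φ hφ).antisymm (hgap φ hφ)) hφ]
    ring

end RespectsStrictUnanimity

end ConvexCombination

section Statement

variable {S : Type*} [MeasurableSpace S] [Nonempty S]
variable {V : Type*} [AddCommGroup V] [Module ℝ V]

theorem statement19_general (I I' I'' : (S → ℝ) → ℝ)
    (hcl : ConstLinearFn I) (hcl' : ConstLinearFn I') (hcl'' : ConstLinearFn I'')
    (hle : ∀ φ, IsSimpleFn φ → I' φ ≤ I'' φ) :
    (∀ φ ψ, IsSimpleFn φ → IsSimpleFn ψ →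
        I' ψ < I' φ → I'' ψ < I'' φ → I ψ < I φ) ↔
      ∃ α ∈ Set.Icc (0 : ℝ) 1,
        ∀ φ, IsSimpleFn φ → I φ = α * I' φ + (1 - α) * I'' φ :=
  ⟨fun hU => RespectsStrictUnanimity.exists_eq_convexCombination hU hcl hcl' hcl'' hle,
    fun ⟨_, hα, hI⟩ => respectsStrictUnanimity_of_eq_convexCombination hα hI⟩

/-- Lemma 7: for monotonic constant-linear functionals
`I, I', I''` on `B₀(Σ)` with `I' ≤ I''`, `I` respects the strict unanimity of
`I'` and `I''` iff `I` is a fixed convex combination `α I' + (1-α) I''`. -/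
theorem statement19 (I I' I'' : (S → ℝ) → ℝ)
    (hI : MonotonicFn I) (hI' : MonotonicFn I') (hI'' : MonotonicFn I'')
    (hcl : ConstLinearFn I) (hcl' : ConstLinearFn I') (hcl'' : ConstLinearFn I'')
    (hle : ∀ φ, IsSimpleFn φ → I' φ ≤ I'' φ) :
    (∀ φ ψ, IsSimpleFn φ → IsSimpleFn ψ →
        I' ψ < I' φ → I'' ψ < I'' φ → I ψ < I φ) ↔
      ∃ α ∈ Set.Icc (0 : ℝ) 1,
        ∀ φ, IsSimpleFn φ → I φ = α * I' φ + (1 - α) * I'' φ :=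
  statement19_general I I' I'' hcl hcl' hcl'' hle

end Statement
end
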